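/- Let H ∈ ℂ^{M×N}, A ∈ ℂ^{M×K}, F(W) = (1/2)‖HW − A‖_F², ∇F(W) = Hᴴ(HW − A), and suppose L > 0 satisfies ‖HX‖_F² ≤ L‖X‖_F² for all X ∈ ℂ^{N×K}. Fix η > 0, let Ω = {W ∈ ℂ^{N×K} : for every row index n, Σ_k |w_{n,k}|² ≤ η}, let α > 0, and let W_opt ∈ Ω satisfy F(W_opt) ≤ F(V) for all V ∈ Ω. If Wᵗ ∈ ℂ^{N×K} and Wᵗ⁺¹ ∈ Ω is the metric projection of Wᵗ − α∇F(Wᵗ) onto Ω, then Re⟨Wᵗ − W_opt, Wᵗ − Wᵗ⁺¹⟩_F ≥ α·[F(Wᵗ⁺¹) − F(W_opt)] + (1 − αL/2)‖Wᵗ⁺¹ − Wᵗ‖_F². -/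

import Mathlib

open Matrix
open scoped BigOperators

/-- Frobenius norm of a complex matrix. -/
noncomputable def frobNorm {m n : Type*} [Fintype m] [Fintype n] (X : Matrix m n ℂ) : ℝ :=
  Real.sqrt (∑ i, ∑ j, ‖X i j‖ ^ 2)

/-- Real part of the Frobenius inner product: Re(trace(Xᴴ Y)). -/
noncomputable def reInnerF {m n : Type*} [Fintype m] [Fintype n] (X Y : Matrix m n ℂ) : ℝ :=
  (Matrix.trace (Xᴴ * Y)).re

/-- Objective F(W) = (1/2)‖HW − A‖_F². -/
noncomputable def objF {M N K : ℕ} (H : Matrix (Fin M) (Fin N) ℂ)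
    (A : Matrix (Fin M) (Fin K) ℂ) (W : Matrix (Fin N) (Fin K) ℂ) : ℝ :=
  (1 / 2) * frobNorm (H * W - A) ^ 2

/-- Gradient ∇F(W) = Hᴴ(HW − A). -/
noncomputable def gradF {M N K : ℕ} (H : Matrix (Fin M) (Fin N) ℂ)
    (A : Matrix (Fin M) (Fin K) ℂ) (W : Matrix (Fin N) (Fin K) ℂ) :
    Matrix (Fin N) (Fin K) ℂ :=
  Hᴴ * (H * W - A)

/-- Feasible set Ω = {W : each row has squared norm ≤ η}. -/
def OmegaSet {N K : ℕ} (η : ℝ) : Set (Matrix (Fin N) (Fin K) ℂ) :=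
  {W | ∀ n, (∑ k, ‖W n k‖ ^ 2) ≤ η}

section aux
variable {m n : Type*} [Fintype m] [Fintype n]

lemma reInnerF_comm (X Y : Matrix m n ℂ) : reInnerF X Y = reInnerF Y X := by
  unfold reInnerF
  rw [show Yᴴ * X = (Xᴴ * Y)ᴴ by rw [conjTranspose_mul, conjTranspose_conjTranspose],
    Matrix.trace_conjTranspose]
  simp

lemma reInnerF_add_right (X Y Z : Matrix m n ℂ) :
    reInnerF X (Y + Z) = reInnerF X Y + reInnerF X Z := by
  unfold reInnerF; rw [Matrix.mul_add, Matrix.trace_add]; simp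

lemma reInnerF_sub_right (X Y Z : Matrix m n ℂ) :
    reInnerF X (Y - Z) = reInnerF X Y - reInnerF X Z := by
  unfold reInnerF; rw [Matrix.mul_sub, Matrix.trace_sub]; simp

lemma reInnerF_add_left (X Y Z : Matrix m n ℂ) :
    reInnerF (X + Y) Z = reInnerF X Z + reInnerF Y Z := by
  rw [reInnerF_comm, reInnerF_add_right, reInnerF_comm Z, reInnerF_comm Z]

lemma reInnerF_sub_left (X Y Z : Matrix m n ℂ) :
    reInnerF (X - Y) Z = reInnerF X Z - reInnerF Y Z := by
  rw [reInnerF_comm, reInnerF_sub_right, reInnerF_comm Z, reInnerF_comm Z]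

lemma reInnerF_smul_right (r : ℝ) (X Y : Matrix m n ℂ) :
    reInnerF X (r • Y) = r * reInnerF X Y := by
  unfold reInnerF
  rw [Matrix.mul_smul, Matrix.trace_smul]
  simp [Complex.real_smul]

lemma reInnerF_smul_left (r : ℝ) (X Y : Matrix m n ℂ) :
    reInnerF (r • X) Y = r * reInnerF X Y := by
  rw [reInnerF_comm, reInnerF_smul_right, reInnerF_comm]

lemma reInnerF_self (X : Matrix m n ℂ) : reInnerF X X = ∑ i, ∑ j, ‖X i j‖ ^ 2 := by
  unfold reInnerF Matrix.trace
  simp only [Matrix.diag_apply, Matrix.mul_apply, Matrix.conjTranspose_apply]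
  rw [Complex.re_sum]
  rw [Finset.sum_comm]
  refine Finset.sum_congr rfl fun i _ => ?_
  rw [Complex.re_sum]
  refine Finset.sum_congr rfl fun j _ => ?_
  rw [Complex.star_def, ← Complex.normSq_eq_conj_mul_self]
  rw [Complex.ofReal_re, Complex.normSq_eq_norm_sq]

lemma frobNorm_nonneg (X : Matrix m n ℂ) : 0 ≤ frobNorm X := Real.sqrt_nonneg _

lemma frobNorm_sq (X : Matrix m n ℂ) : frobNorm X ^ 2 = reInnerF X X := by
  unfold frobNorm
  rw [Real.sq_sqrt (by positivity), reInnerF_self]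

lemma frob_expand_sub (X Y : Matrix m n ℂ) :
    frobNorm (X - Y) ^ 2 = frobNorm X ^ 2 - 2 * reInnerF X Y + frobNorm Y ^ 2 := by
  rw [frobNorm_sq, frobNorm_sq, frobNorm_sq, reInnerF_sub_left, reInnerF_sub_right,
    reInnerF_sub_right, reInnerF_comm Y X]; ring

lemma frob_expand_add (X Y : Matrix m n ℂ) :
    frobNorm (X + Y) ^ 2 = frobNorm X ^ 2 + 2 * reInnerF X Y + frobNorm Y ^ 2 := by
  rw [frobNorm_sq, frobNorm_sq, frobNorm_sq, reInnerF_add_left, reInnerF_add_right,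
    reInnerF_add_right, reInnerF_comm Y X]; ring

lemma reInnerF_adj {p : Type*} [Fintype p] (H : Matrix p m ℂ) (P : Matrix p n ℂ)
    (D : Matrix m n ℂ) : reInnerF P (H * D) = reInnerF (Hᴴ * P) D := by
  unfold reInnerF
  rw [conjTranspose_mul, conjTranspose_conjTranspose, Matrix.mul_assoc]

end aux

lemma omega_convex {N K : ℕ} {η : ℝ} {A B : Matrix (Fin N) (Fin K) ℂ}
    (hA : A ∈ OmegaSet η) (hB : B ∈ OmegaSet η) {t : ℝ} (ht0 : 0 ≤ t) (ht1 : t ≤ 1) :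
    A + t • (B - A) ∈ OmegaSet η := by
  intro nn
  have hrow : ∀ k, ‖(A + t • (B - A)) nn k‖ ^ 2
      ≤ (1 - t) * ‖A nn k‖ ^ 2 + t * ‖B nn k‖ ^ 2 := by
    intro k
    set a := A nn k; set b := B nn k
    have hentry : (A + t • (B - A)) nn k = (1 - t) • a + t • b := by
      simp only [Matrix.add_apply, Matrix.smul_apply, Matrix.sub_apply, smul_sub, sub_smul,
        one_smul, Complex.real_smul]
      ring
    have hnorm : ‖(1 - t) • a + t • b‖ ≤ (1 - t) * ‖a‖ + t * ‖b‖ := by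
      calc ‖(1 - t) • a + t • b‖ ≤ ‖(1 - t) • a‖ + ‖t • b‖ := norm_add_le _ _
        _ = (1 - t) * ‖a‖ + t * ‖b‖ := by
            rw [norm_smul, norm_smul, Real.norm_eq_abs, Real.norm_eq_abs,
              abs_of_nonneg (by linarith), abs_of_nonneg ht0]
    rw [hentry]
    have h1 : (0:ℝ) ≤ ‖a‖ := norm_nonneg _
    have h2 : (0:ℝ) ≤ ‖b‖ := norm_nonneg _
    have h3 : (0:ℝ) ≤ ‖(1 - t) • a + t • b‖ := norm_nonneg _
    nlinarith [mul_self_le_mul_self h3 hnorm, sq_nonneg (‖a‖ - ‖b‖),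
      mul_nonneg (mul_nonneg ht0 (by linarith : (0:ℝ) ≤ 1 - t)) (sq_nonneg (‖a‖ - ‖b‖))]
  calc (∑ k, ‖(A + t • (B - A)) nn k‖ ^ 2)
      ≤ ∑ k, ((1 - t) * ‖A nn k‖ ^ 2 + t * ‖B nn k‖ ^ 2) :=
        Finset.sum_le_sum fun k _ => hrow k
    _ = (1 - t) * (∑ k, ‖A nn k‖ ^ 2) + t * (∑ k, ‖B nn k‖ ^ 2) := by
        rw [Finset.sum_add_distrib, Finset.mul_sum, Finset.mul_sum]
    _ ≤ (1 - t) * η + t * η := by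
        have h1 := hA nn; have h2 := hB nn
        have hApos : (0:ℝ) ≤ ∑ k, ‖A nn k‖ ^ 2 := Finset.sum_nonneg fun k _ => by positivity
        have hBpos : (0:ℝ) ≤ ∑ k, ‖B nn k‖ ^ 2 := Finset.sum_nonneg fun k _ => by positivity
        have : (0:ℝ) ≤ 1 - t := by linarith
        nlinarith
    _ = η := by ring

theorem pgd_optimal_inner_bound {M N K : ℕ}
    (H : Matrix (Fin M) (Fin N) ℂ) (A : Matrix (Fin M) (Fin K) ℂ)
    (L : ℝ) (hL : 0 < L)
    (hHL : ∀ X : Matrix (Fin N) (Fin K) ℂ, frobNorm (H * X) ^ 2 ≤ L * frobNorm X ^ 2)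
    (η : ℝ) (hη : 0 < η) (α : ℝ) (hα : 0 < α)
    (Wopt : Matrix (Fin N) (Fin K) ℂ) (hWoptΩ : Wopt ∈ OmegaSet η)
    (hWopt : ∀ V ∈ OmegaSet η, objF H A Wopt ≤ objF H A V)
    (Wt Wt1 : Matrix (Fin N) (Fin K) ℂ) (hWt1 : Wt1 ∈ OmegaSet η)
    (hproj : ∀ V ∈ OmegaSet η,
      frobNorm ((Wt - α • gradF H A Wt) - Wt1) ≤ frobNorm ((Wt - α • gradF H A Wt) - V)) :
    reInnerF (Wt - Wopt) (Wt - Wt1)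
      ≥ α * (objF H A Wt1 - objF H A Wopt)
        + (1 - α * L / 2) * frobNorm (Wt1 - Wt) ^ 2 := by
  set g := gradF H A Wt with hg
  set d : Matrix (Fin N) (Fin K) ℂ := Wopt - Wt1 with hd
  set C : Matrix (Fin N) (Fin K) ℂ := (Wt - α • g) - Wt1 with hC
  have hD0 : 0 ≤ frobNorm d ^ 2 := by positivity
  -- variational inequality from projection
  have key : ∀ t : ℝ, 0 < t → t ≤ 1 →
      2 * (t * reInnerF C d) ≤ t ^ 2 * frobNorm d ^ 2 := by
    intro t ht0 ht1
    have hmem : Wt1 + t • d ∈ OmegaSet η := omega_convex hWt1 hWoptΩ ht0.le ht1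
    have h := hproj _ hmem
    have hEq : (Wt - α • g) - (Wt1 + t • d) = C - t • d := by rw [hC]; abel
    rw [hEq] at h
    have h2 : frobNorm C ^ 2 ≤ frobNorm (C - t • d) ^ 2 := by
      have := mul_self_le_mul_self (frobNorm_nonneg _) h
      nlinarith
    rw [frob_expand_sub C (t • d)] at h2
    have hsm : reInnerF C (t • d) = t * reInnerF C d := reInnerF_smul_right t C d
    have hsq : frobNorm (t • d) ^ 2 = t ^ 2 * frobNorm d ^ 2 := by
      rw [frobNorm_sq, frobNorm_sq, reInnerF_smul_right, reInnerF_smul_left]; ring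
    rw [hsm, hsq] at h2
    linarith
  have hVI : reInnerF C d ≤ 0 := by
    by_contra hS
    push_neg at hS
    set S := reInnerF C d with hSdef
    set D := frobNorm d ^ 2 with hDdef
    rcases eq_or_lt_of_le hD0 with hD | hD
    · have h := key 1 one_pos le_rfl
      rw [← hD] at h
      nlinarith
    · set t := min 1 (S / D) with ht
      have ht0 : 0 < t := lt_min one_pos (div_pos hS hD)
      have ht1 : t ≤ 1 := min_le_left _ _
      have h := key t ht0 ht1
      have h2 : t * D ≤ S := by
        calc t * D ≤ (S / D) * D :=
              mul_le_mul_of_nonneg_right (min_le_right _ _) hD.le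
          _ = S := div_mul_cancel₀ _ hD.ne'
      nlinarith
  -- smoothness (exact quadratic expansion)
  have hexpand : ∀ V : Matrix (Fin N) (Fin K) ℂ,
      objF H A V = objF H A Wt + reInnerF g (V - Wt)
        + (1 / 2) * frobNorm (H * (V - Wt)) ^ 2 := by
    intro V
    have hdec : H * V - A = (H * Wt - A) + H * (V - Wt) := by
      rw [Matrix.mul_sub]; abel
    have hadj : reInnerF (H * Wt - A) (H * (V - Wt)) = reInnerF g (V - Wt) := by
      rw [reInnerF_adj, hg, gradF]
    unfold objF
    rw [hdec, frob_expand_add, hadj]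
    ring
  have hsm : objF H A Wt1 ≤ objF H A Wt + reInnerF g (Wt1 - Wt)
      + (L / 2) * frobNorm (Wt1 - Wt) ^ 2 := by
    have h1 := hexpand Wt1
    have h2 := hHL (Wt1 - Wt)
    linarith
  have hcv : objF H A Wt + reInnerF g (Wopt - Wt) ≤ objF H A Wopt := by
    have h1 := hexpand Wopt
    have h2 : 0 ≤ frobNorm (H * (Wopt - Wt)) ^ 2 := by positivity
    linarith
  -- combine
  have hsplit : reInnerF g (Wopt - Wt) = reInnerF g d + reInnerF g (Wt1 - Wt) := by
    rw [hd, reInnerF_sub_right, reInnerF_sub_right, reInnerF_sub_right]; ring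
  have hCd : reInnerF C d = reInnerF (Wt - Wt1) d - α * reInnerF g d := by
    rw [hC, reInnerF_sub_left, reInnerF_sub_left, reInnerF_smul_left, reInnerF_sub_left]
    ring
  have hP : frobNorm (Wt1 - Wt) ^ 2 = reInnerF (Wt - Wt1) (Wt - Wt1) := by
    rw [frobNorm_sq, reInnerF_sub_left, reInnerF_sub_left, reInnerF_sub_right,
      reInnerF_sub_right, reInnerF_sub_right, reInnerF_sub_right, reInnerF_comm Wt1 Wt]
    ring
  have hgoal : reInnerF (Wt - Wopt) (Wt - Wt1)
      = frobNorm (Wt1 - Wt) ^ 2 - reInnerF (Wt - Wt1) d := by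
    rw [hP, show Wt - Wopt = (Wt - Wt1) - d from by rw [hd]; abel,
      reInnerF_sub_left, reInnerF_comm d]
  rw [ge_iff_le, hgoal]
  have hVI2 : reInnerF (Wt - Wt1) d ≤ α * reInnerF g d := by linarith
  have hineq : objF H A Wt1 - objF H A Wopt
      ≤ L / 2 * frobNorm (Wt1 - Wt) ^ 2 - reInnerF g d := by linarith
  have h8 := mul_le_mul_of_nonneg_left hineq hα.le
  nlinarith [h8, hVI2]
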